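/- Theorem (IG + PL under relaxed WGC): suppose $f = \frac{1}{n}\sum_i f_i$ is $L$-smooth and $\mu$-PL with minimum $f(x^*)$, each $f_i$ is $L_{\max}$-smooth, and $\frac{1}{n}\sum_i\|\nabla f_i(x)\|^2 \leq 2\alpha L(f(x)-f(x^*)) + \sigma^2$ for all $x$. Run the incremental gradient method for $T$ epochs with step size $\eta \leq \min\{\frac{1}{\sqrt{2}nL_{\max}}, \frac{\sqrt{\mu}}{2L_{\max} n\sqrt{\alpha L}}\}$. Then $f(x_n^T) - f(x^*) \leq \left(1 - \frac{n\mu\eta}{2}\right)^T(f(x^0) - f(x^*)) + \frac{2 L_{\max}^2 \eta^2 n^2 \sigma^2}{\mu}$. -/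

import Mathlib

noncomputable section

/-- One epoch of incremental-gradient updates in the fixed order `1, …, n`:
the iterate after `j` steps starting from `x0`, with gradient oracle `g` and
step size `η`. -/
def igIter {d n : ℕ}
    (g : Fin n → EuclideanSpace ℝ (Fin d) → EuclideanSpace ℝ (Fin d))
    (η : ℝ) (x0 : EuclideanSpace ℝ (Fin d)) :
    ℕ → EuclideanSpace ℝ (Fin d)
  | 0 => x0
  | j + 1 =>
      if h : j < n then
        igIter g η x0 j - η • g ⟨j, h⟩ (igIter g η x0 j)
      else igIter g η x0 j

/-! Over one epoch started at `y`, the inner iterates stay within `O(η n)` of `y`, so the sum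
`G` of the incremental gradients differs from `n ∇F(y)` by an error `e` with
`‖e‖² ≤ 2 Lmax² η² n³ ∑ᵢ ‖∇fᵢ(y)‖²` (a discrete Grönwall argument). The descent lemma for the
step `y ↦ y - η G` gives `F(xₙ) ≤ F(y) - η n ‖∇F(y)‖² / 2 + η ‖e‖² / (2n)`. The relaxed weak
growth condition bounds `‖e‖²` by `F(y) - F(x*)` and `σ²`; the step-size restriction makes the
first part at most half of the PL decrease `η n μ (F(y) - F(x*))`. Hence each epoch contracts the
optimality gap by `1 - n μ η / 2` up to the additive noise `Lmax² n³ η³ σ²`, and unrolling this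
recursion gives the rate. -/

open InnerProductSpace Finset

section Smooth

variable {E : Type*} [NormedAddCommGroup E] [InnerProductSpace ℝ E] [CompleteSpace E]

theorem hasDerivAt_apply_add_smul {f : E → ℝ} (hf : Differentiable ℝ f) (x v : E) (t : ℝ) :
    HasDerivAt (fun s : ℝ => f (x + s • v)) ⟪gradient f (x + t • v), v⟫_ℝ t := by
  rw [inner_gradient_left]
  have hline : HasDerivAt (fun s : ℝ => x + s • v) v t := by
    simpa using ((hasDerivAt_id t).smul_const v).const_add x
  exact (hf _).hasFDerivAt.comp_hasDerivAt t hline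

theorem apply_add_le_of_lipschitz_gradient {f : E → ℝ} (hf : Differentiable ℝ f)
    {L : ℝ} (hlip : ∀ x y, ‖gradient f x - gradient f y‖ ≤ L * ‖x - y‖) (x v : E) :
    f (x + v) ≤ f x + ⟪gradient f x, v⟫_ℝ + L / 2 * ‖v‖ ^ 2 := by
  set φ : ℝ → ℝ := fun t => f (x + t • v) - t * ⟪gradient f x, v⟫_ℝ - L / 2 * t ^ 2 * ‖v‖ ^ 2
  have hφ' : ∀ t, HasDerivAt φ
      (⟪gradient f (x + t • v) - gradient f x, v⟫_ℝ - L * t * ‖v‖ ^ 2) t := by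
    intro t
    have := ((hasDerivAt_apply_add_smul hf x v t).sub ((hasDerivAt_id t).mul_const
      ⟪gradient f x, v⟫_ℝ)).sub (((hasDerivAt_pow 2 t).const_mul (L / 2)).mul_const (‖v‖ ^ 2))
    refine this.congr_deriv ?_
    rw [inner_sub_left, Nat.add_one_sub_one, pow_one]
    push_cast
    ring
  have hanti : AntitoneOn φ (Set.Icc 0 1) := by
    refine antitoneOn_of_hasDerivWithinAt_nonpos (convex_Icc 0 1)
      (fun t _ => (hφ' t).continuousAt.continuousWithinAt) (fun t _ => (hφ' t).hasDerivWithinAt)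
      fun t ht => ?_
    rw [interior_Icc] at ht
    have hgrad : ‖gradient f (x + t • v) - gradient f x‖ ≤ L * (t * ‖v‖) := by
      simpa [norm_smul, abs_of_pos ht.1] using hlip (x + t • v) x
    nlinarith [real_inner_le_norm (gradient f (x + t • v) - gradient f x) v, norm_nonneg v]
  have := hanti (by simp) (by simp) zero_le_one
  simp only [φ, zero_smul, one_smul, add_zero, zero_mul, sub_zero, one_mul, one_pow,
    zero_pow two_ne_zero, mul_zero] at this
  linarith

theorem apply_sub_smul_le_of_lipschitz_gradient {f : E → ℝ} (hf : Differentiable ℝ f) {L η m : ℝ}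
    (hlip : ∀ x y, ‖gradient f x - gradient f y‖ ≤ L * ‖x - y‖)
    (hη : 0 < η) (hm : 0 < m) (hstep : L * η * m ≤ 1) (y g : E) :
    f (y - η • g)
      ≤ f y - η * m / 2 * ‖gradient f y‖ ^ 2 + η / (2 * m) * ‖g - m • gradient f y‖ ^ 2 := by
  have hdesc := apply_add_le_of_lipschitz_gradient hf hlip y (-(η • g))
  rw [← sub_eq_add_neg, inner_neg_right, inner_smul_right, norm_neg, norm_smul, mul_pow,
    Real.norm_eq_abs, sq_abs] at hdesc
  have hexpand : ‖g - m • gradient f y‖ ^ 2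
      = ‖g‖ ^ 2 - 2 * m * ⟪gradient f y, g⟫_ℝ + m ^ 2 * ‖gradient f y‖ ^ 2 := by
    rw [norm_sub_sq_real, inner_smul_right, norm_smul, mul_pow, Real.norm_eq_abs, sq_abs,
      real_inner_comm]
    ring
  have hslack : 0 ≤ η / (2 * m) * (1 - L * η * m) * ‖g‖ ^ 2 := by
    have := sub_nonneg.2 hstep
    positivity
  rw [hexpand]
  field_simp at hslack ⊢
  nlinarith

theorem sq_norm_gradient_le_of_lipschitz_gradient {f : E → ℝ} (hf : Differentiable ℝ f)
    {L : ℝ} (hL : 0 < L) (hlip : ∀ x y, ‖gradient f x - gradient f y‖ ≤ L * ‖x - y‖)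
    {xstar : E} (hmin : ∀ x, f xstar ≤ f x) (x : E) :
    ‖gradient f x‖ ^ 2 ≤ 2 * L * (f x - f xstar) := by
  have h := apply_add_le_of_lipschitz_gradient hf hlip x (-(1 / L) • gradient f x)
  rw [inner_smul_right, real_inner_self_eq_norm_sq, norm_smul, mul_pow, Real.norm_eq_abs,
    sq_abs] at h
  have := hmin (x + -(1 / L) • gradient f x)
  field_simp at h
  nlinarith

theorem pl_const_le_of_lipschitz_gradient {f : E → ℝ} (hf : Differentiable ℝ f) {L μ : ℝ}
    (hL : 0 < L) (hlip : ∀ x y, ‖gradient f x - gradient f y‖ ≤ L * ‖x - y‖)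
    {xstar : E} (hmin : ∀ x, f xstar ≤ f x)
    (hPL : ∀ x, 2 * μ * (f x - f xstar) ≤ ‖gradient f x‖ ^ 2) {z : E} (hz : f xstar < f z) :
    μ ≤ L := by
  have := sq_norm_gradient_le_of_lipschitz_gradient hf hL hlip hmin z
  nlinarith [hPL z]

theorem gradient_inv_mul_sum {n : ℕ} {f : Fin n → E → ℝ} (hdiff : ∀ i, Differentiable ℝ (f i))
    (x : E) :
    gradient (fun x => (n : ℝ)⁻¹ * ∑ i, f i x) x = (n : ℝ)⁻¹ • ∑ i, gradient (f i) x := by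
  have h : HasFDerivAt (fun x => (n : ℝ)⁻¹ * ∑ i, f i x)
      ((n : ℝ)⁻¹ • ∑ i, fderiv ℝ (f i) x) x :=
    (HasFDerivAt.fun_sum fun i _ => (hdiff i x).hasFDerivAt).const_mul _
  rw [gradient, h.fderiv, map_smul, map_sum]
  rfl

end Smooth

theorem sum_range_natCast_le_sq_div_two (n : ℕ) : ∑ j ∈ range n, (j : ℝ) ≤ (n : ℝ) ^ 2 / 2 := by
  have h : (∑ j ∈ range n, j) * 2 ≤ n ^ 2 := by
    rw [sum_range_id_mul_two, sq]
    exact Nat.mul_le_mul_left _ (Nat.sub_le _ _)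
  have : ((∑ j ∈ range n, j : ℕ) : ℝ) * 2 ≤ (n : ℝ) ^ 2 := by exact_mod_cast h
  push_cast at this
  linarith

theorem sum_sq_le_of_le_mul_sum {n : ℕ} {η K : ℝ} {c D : ℕ → ℝ} (hD0 : ∀ j, 0 ≤ D j)
    (hD : ∀ j < n, D j ≤ η * ∑ k ∈ range j, (c k + K * D k))
    (hsmall : (n * K * η) ^ 2 ≤ 1 / 2) :
    ∑ j ∈ range n, D j ^ 2 ≤ 2 * η ^ 2 * n ^ 2 * ∑ k ∈ range n, c k ^ 2 := by
  set V := ∑ j ∈ range n, D j ^ 2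
  set B := ∑ k ∈ range n, c k ^ 2
  have hV0 : 0 ≤ V := sum_nonneg fun _ _ => sq_nonneg _
  have hDj : ∀ j < n, D j ^ 2 ≤ 2 * η ^ 2 * j * (B + K ^ 2 * V) := by
    intro j hj
    have hpartial : ∑ k ∈ range j, (c k + K * D k) ^ 2 ≤ 2 * (B + K ^ 2 * V) := by
      calc ∑ k ∈ range j, (c k + K * D k) ^ 2
          ≤ ∑ k ∈ range n, (2 * c k ^ 2 + 2 * K ^ 2 * D k ^ 2) := by
            refine sum_le_sum_of_subset_of_nonneg (range_subset_range.2 hj.le)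
              (fun _ _ _ => by positivity) |>.trans' (sum_le_sum fun k _ => ?_)
            nlinarith [sq_nonneg (c k - K * D k)]
        _ = 2 * (B + K ^ 2 * V) := by
            rw [sum_add_distrib, ← mul_sum, ← mul_sum]; ring
    calc D j ^ 2 ≤ (η * ∑ k ∈ range j, (c k + K * D k)) ^ 2 :=
          pow_le_pow_left₀ (hD0 j) (hD j hj) 2
      _ = η ^ 2 * (∑ k ∈ range j, (c k + K * D k)) ^ 2 := mul_pow _ _ _
      _ ≤ η ^ 2 * (j * ∑ k ∈ range j, (c k + K * D k) ^ 2) := by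
          gcongr; simpa using sq_sum_le_card_mul_sum_sq (s := range j)
      _ ≤ η ^ 2 * (j * (2 * (B + K ^ 2 * V))) := by gcongr
      _ = 2 * η ^ 2 * j * (B + K ^ 2 * V) := by ring
  have hVle : V ≤ η ^ 2 * n ^ 2 * B + (n * K * η) ^ 2 * V :=
    calc V ≤ ∑ j ∈ range n, 2 * η ^ 2 * j * (B + K ^ 2 * V) :=
          sum_le_sum fun j hj => hDj j (mem_range.1 hj)
      _ = 2 * η ^ 2 * (B + K ^ 2 * V) * ∑ j ∈ range n, (j : ℝ) := by
          rw [mul_sum (range n) (fun j : ℕ => (j : ℝ))]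
          exact sum_congr rfl fun j _ => by ring
      _ ≤ 2 * η ^ 2 * (B + K ^ 2 * V) * ((n : ℝ) ^ 2 / 2) := by
          gcongr; exact sum_range_natCast_le_sq_div_two n
      _ = η ^ 2 * n ^ 2 * B + (n * K * η) ^ 2 * V := by ring
  -- absorb the `(n K η)² V ≤ V / 2` term into the left-hand side
  nlinarith [mul_le_mul_of_nonneg_right hsmall hV0]

theorem le_pow_mul_add_div_of_le_mul_add {a : ℕ → ℝ} {q N : ℝ} (hq0 : 0 ≤ q) (hq1 : q < 1)
    (hN : 0 ≤ N) (ha : ∀ t, a (t + 1) ≤ q * a t + N) (T : ℕ) :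
    a T ≤ q ^ T * a 0 + N / (1 - q) := by
  have h1q : 0 < 1 - q := sub_pos.2 hq1
  -- `N / (1 - q)` is the fixed point of `s ↦ q * s + N`, so no geometric sum is needed
  induction T with
  | zero => simp only [pow_zero, one_mul, le_add_iff_nonneg_right]; positivity
  | succ T ih =>
    calc a (T + 1) ≤ q * (q ^ T * a 0 + N / (1 - q)) + N :=
          (ha T).trans (by gcongr)
      _ = q ^ (T + 1) * a 0 + N / (1 - q) := by field_simp; ring

/-- Reindexing the components by `ℕ` (zero from `n` on) lets `igIter_succ` hold for every `j`,
since `igIter` is constant after step `n`. -/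
def extendByZero {α β : Type*} [Zero β] {n : ℕ} (g : Fin n → α → β) (k : ℕ) (x : α) : β :=
  if h : k < n then g ⟨k, h⟩ x else 0

theorem sum_range_extendByZero {α β M : Type*} [Zero β] [AddCommMonoid M] {n : ℕ}
    (g : Fin n → α → β) (φ : β → M) (x : α) :
    ∑ k ∈ range n, φ (extendByZero g k x) = ∑ i, φ (g i x) := by
  rw [← Fin.sum_univ_eq_sum_range]
  simp [extendByZero]

section IncrementalGradient

variable {d n : ℕ} {g : Fin n → EuclideanSpace ℝ (Fin d) → EuclideanSpace ℝ (Fin d)} {η : ℝ}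

theorem igIter_succ (y : EuclideanSpace ℝ (Fin d)) (j : ℕ) :
    igIter g η y (j + 1) = igIter g η y j - η • extendByZero g j (igIter g η y j) := by
  by_cases h : j < n <;> simp [igIter, extendByZero, h]

theorem igIter_eq_sub_sum (y : EuclideanSpace ℝ (Fin d)) (j : ℕ) :
    igIter g η y j = y - η • ∑ k ∈ range j, extendByZero g k (igIter g η y k) := by
  induction j with
  | zero => simp [igIter]
  | succ j ih => rw [igIter_succ, sum_range_succ, smul_add, ih]; abel

theorem norm_extendByZero_sub_le {K : ℝ} (hg : ∀ i x y, ‖g i x - g i y‖ ≤ K * ‖x - y‖)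
    {k : ℕ} (hk : k < n) (x y : EuclideanSpace ℝ (Fin d)) :
    ‖extendByZero g k x - extendByZero g k y‖ ≤ K * ‖x - y‖ := by
  simpa [extendByZero, hk] using hg ⟨k, hk⟩ x y

theorem sum_sq_norm_igIter_sub_le {K : ℝ} (hg : ∀ i x y, ‖g i x - g i y‖ ≤ K * ‖x - y‖)
    (hη : 0 ≤ η) (hsmall : (n * K * η) ^ 2 ≤ 1 / 2)
    (y : EuclideanSpace ℝ (Fin d)) :
    ∑ j ∈ range n, ‖igIter g η y j - y‖ ^ 2 ≤ 2 * η ^ 2 * n ^ 2 * ∑ i, ‖g i y‖ ^ 2 := by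
  rw [← sum_range_extendByZero g (fun v => ‖v‖ ^ 2)]
  refine sum_sq_le_of_le_mul_sum (fun _ => norm_nonneg _) (fun j hj => ?_) hsmall
  rw [igIter_eq_sub_sum, sub_sub_cancel_left, norm_neg, norm_smul, Real.norm_of_nonneg hη]
  gcongr
  refine (norm_sum_le _ _).trans (sum_le_sum fun k hk => ?_)
  have hkn : k < n := (mem_range.1 hk).trans hj
  calc ‖extendByZero g k (igIter g η y k)‖
      ≤ ‖extendByZero g k y‖ + ‖extendByZero g k (igIter g η y k) - extendByZero g k y‖ :=
        norm_le_insert' _ _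
    _ ≤ ‖extendByZero g k y‖ + K * ‖igIter g η y k - y‖ := by
        gcongr; exact norm_extendByZero_sub_le hg hkn _ _

theorem norm_sum_igIter_sub_sum_sq_le {K : ℝ}
    (hg : ∀ i x y, ‖g i x - g i y‖ ≤ K * ‖x - y‖) (hη : 0 ≤ η) (hsmall : (n * K * η) ^ 2 ≤ 1 / 2)
    (y : EuclideanSpace ℝ (Fin d)) :
    ‖∑ k ∈ range n, extendByZero g k (igIter g η y k) - ∑ i, g i y‖ ^ 2
      ≤ 2 * K ^ 2 * η ^ 2 * n ^ 3 * ∑ i, ‖g i y‖ ^ 2 := by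
  have hsum : ∑ k ∈ range n, extendByZero g k y = ∑ i, g i y :=
    sum_range_extendByZero g (fun v => v) y
  rw [← hsum, ← sum_sub_distrib]
  calc ‖∑ k ∈ range n, (extendByZero g k (igIter g η y k) - extendByZero g k y)‖ ^ 2
      ≤ (∑ k ∈ range n, ‖extendByZero g k (igIter g η y k) - extendByZero g k y‖) ^ 2 := by
        gcongr; exact norm_sum_le _ _
    _ ≤ n * ∑ k ∈ range n, ‖extendByZero g k (igIter g η y k) - extendByZero g k y‖ ^ 2 := by
        simpa using sq_sum_le_card_mul_sum_sq (s := range n)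
    _ ≤ n * ∑ k ∈ range n, K ^ 2 * ‖igIter g η y k - y‖ ^ 2 := by
        gcongr with k hk
        rw [← mul_pow]
        gcongr
        exact norm_extendByZero_sub_le hg (mem_range.1 hk) _ _
    _ ≤ n * (K ^ 2 * (2 * η ^ 2 * n ^ 2 * ∑ i, ‖g i y‖ ^ 2)) := by
        rw [← mul_sum]
        gcongr
        exact sum_sq_norm_igIter_sub_le hg hη hsmall y
    _ = 2 * K ^ 2 * η ^ 2 * n ^ 3 * ∑ i, ‖g i y‖ ^ 2 := by ring

end IncrementalGradient

theorem igIter_epoch_le {d n : ℕ} (hn : 0 < n) {f : Fin n → EuclideanSpace ℝ (Fin d) → ℝ}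
    (hdiff : ∀ i, Differentiable ℝ (f i)) {F : EuclideanSpace ℝ (Fin d) → ℝ}
    (hF : F = fun x => (n : ℝ)⁻¹ * ∑ i, f i x) {L Lmax μ α σ η : ℝ}
    (hsmooth : ∀ x y, ‖gradient F x - gradient F y‖ ≤ L * ‖x - y‖)
    (hsmooth_i : ∀ i x y, ‖gradient (f i) x - gradient (f i) y‖ ≤ Lmax * ‖x - y‖)
    {xstar : EuclideanSpace ℝ (Fin d)} (hmin : ∀ x, F xstar ≤ F x)
    (hPL : ∀ x, 2 * μ * (F x - F xstar) ≤ ‖gradient F x‖ ^ 2)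
    (hWGC : ∀ x, (n : ℝ)⁻¹ * ∑ i, ‖gradient (f i) x‖ ^ 2 ≤ 2 * α * L * (F x - F xstar) + σ ^ 2)
    (hη : 0 < η) (hLη : L * η * n ≤ 1) (hsmall : (n * Lmax * η) ^ 2 ≤ 1 / 2)
    (hαη : α * L * Lmax ^ 2 * η ^ 2 * n ^ 2 ≤ μ / 4) (y : EuclideanSpace ℝ (Fin d)) :
    F (igIter (fun i => gradient (f i)) η y n) - F xstar
      ≤ (1 - n * μ * η / 2) * (F y - F xstar) + Lmax ^ 2 * n ^ 3 * η ^ 3 * σ ^ 2 := by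
  have hn' : (0 : ℝ) < n := Nat.cast_pos.2 hn
  have hFdiff : Differentiable ℝ F := hF ▸ (Differentiable.fun_sum fun i _ => hdiff i).const_mul _
  have hgradF : (n : ℝ) • gradient F y = ∑ i, gradient (f i) y := by
    rw [hF, gradient_inv_mul_sum hdiff, smul_inv_smul₀ hn'.ne']
  have hsq : ∑ i, ‖gradient (f i) y‖ ^ 2 ≤ n * (2 * α * L * (F y - F xstar) + σ ^ 2) := by
    have := hWGC y
    rwa [inv_mul_le_iff₀ hn'] at this
  set G := ∑ k ∈ range n, extendByZero (fun i => gradient (f i)) k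
    (igIter (fun i => gradient (f i)) η y k)
  have herr : ‖G - (n : ℝ) • gradient F y‖ ^ 2
      ≤ 2 * Lmax ^ 2 * η ^ 2 * n ^ 3 * ∑ i, ‖gradient (f i) y‖ ^ 2 := by
    rw [hgradF]; exact norm_sum_igIter_sub_sum_sq_le hsmooth_i hη.le hsmall y
  have hΔ : 0 ≤ F y - F xstar := sub_nonneg.2 (hmin y)
  rw [igIter_eq_sub_sum]
  calc F (y - η • G) - F xstar
      ≤ (F y - F xstar) - η * n / 2 * ‖gradient F y‖ ^ 2
          + η / (2 * n) * ‖G - (n : ℝ) • gradient F y‖ ^ 2 := by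
        linarith [apply_sub_smul_le_of_lipschitz_gradient hFdiff hsmooth hη hn' hLη y G]
    _ ≤ (F y - F xstar) - η * n / 2 * (2 * μ * (F y - F xstar))
          + η / (2 * n) * (2 * Lmax ^ 2 * η ^ 2 * n ^ 3
            * (n * (2 * α * L * (F y - F xstar) + σ ^ 2))) := by
        gcongr
        · exact hPL y
        · exact herr.trans (by gcongr)
    _ = (1 - n * μ * η) * (F y - F xstar)
          + 2 * η * n * (α * L * Lmax ^ 2 * η ^ 2 * n ^ 2) * (F y - F xstar)
          + Lmax ^ 2 * n ^ 3 * η ^ 3 * σ ^ 2 := by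
        field_simp; ring
    _ ≤ (1 - n * μ * η) * (F y - F xstar) + 2 * η * n * (μ / 4) * (F y - F xstar)
          + Lmax ^ 2 * n ^ 3 * η ^ 3 * σ ^ 2 := by gcongr
    _ = (1 - n * μ * η / 2) * (F y - F xstar) + Lmax ^ 2 * n ^ 3 * η ^ 3 * σ ^ 2 := by ring

theorem step_size_consequences {n : ℕ} {L Lmax μ α η : ℝ} (hn : 0 < n) (hL : 0 < L)
    (hLmax : 0 < Lmax) (hμ : 0 < μ) (hα : 0 < α) (hη0 : 0 < η)
    (hη : η ≤ min (1 / (Real.sqrt 2 * n * Lmax))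
      (Real.sqrt μ / (2 * Lmax * n * Real.sqrt (α * L)))) :
    (n * Lmax * η) ^ 2 ≤ 1 / 2 ∧ α * L * Lmax ^ 2 * η ^ 2 * n ^ 2 ≤ μ / 4 := by
  have hn' : (0 : ℝ) < n := Nat.cast_pos.2 hn
  have h1 := (le_div_iff₀ (by positivity)).1 (hη.trans (min_le_left _ _))
  have h2 := (le_div_iff₀ (by positivity)).1 (hη.trans (min_le_right _ _))
  have h1sq := pow_le_pow_left₀ (by positivity) h1 2
  have h2sq := pow_le_pow_left₀ (by positivity) h2 2
  simp only [mul_pow, Real.sq_sqrt zero_le_two, Real.sq_sqrt hμ.le,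
    Real.sq_sqrt (mul_pos hα hL).le, one_pow] at h1sq h2sq
  constructor <;> nlinarith

theorem ig_pl_relaxed_wgc_rate_general
    (d n : ℕ) (hn : 0 < n)
    (f : Fin n → EuclideanSpace ℝ (Fin d) → ℝ)
    (hdiff : ∀ i, Differentiable ℝ (f i))
    (F : EuclideanSpace ℝ (Fin d) → ℝ)
    (hF : F = fun x => (n : ℝ)⁻¹ * ∑ i, f i x)
    (L Lmax μ : ℝ) (hL : 0 < L) (hμ : 0 < μ) (hLLmax : L ≤ Lmax)
    (hsmooth : ∀ x y : EuclideanSpace ℝ (Fin d),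
      ‖gradient F x - gradient F y‖ ≤ L * ‖x - y‖)
    (hsmooth_i : ∀ i, ∀ x y : EuclideanSpace ℝ (Fin d),
      ‖gradient (f i) x - gradient (f i) y‖ ≤ Lmax * ‖x - y‖)
    (xstar : EuclideanSpace ℝ (Fin d))
    (hmin : ∀ x, F xstar ≤ F x)
    (hPL : ∀ x, F x - F xstar ≤ 1 / (2 * μ) * ‖gradient F x‖ ^ 2)
    (α σ : ℝ) (hα : 0 < α)
    (hWGC : ∀ x, (n : ℝ)⁻¹ * ∑ i, ‖gradient (f i) x‖ ^ 2
      ≤ 2 * α * L * (F x - F xstar) + σ ^ 2)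
    (η : ℝ) (hη0 : 0 < η)
    (hη : η ≤ min (1 / (Real.sqrt 2 * n * Lmax)) (Real.sqrt μ / (2 * Lmax * n * Real.sqrt (α * L))))
    (x0 : EuclideanSpace ℝ (Fin d)) (T : ℕ) :
    F ((fun y => igIter (fun i => gradient (f i)) η y n)^[T] x0) - F xstar
      ≤ (1 - n * μ * η / 2) ^ T * (F x0 - F xstar)
        + 2 * Lmax ^ 2 * η ^ 2 * n ^ 2 * σ ^ 2 / μ := by
  have hn' : (0 : ℝ) < n := Nat.cast_pos.2 hn
  obtain ⟨hsmall, hαη⟩ := step_size_consequences hn hL (hL.trans_le hLLmax) hμ hα hη0 hη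
  have hnLmaxη : n * Lmax * η ≤ 1 := by nlinarith
  have hLη : L * η * n ≤ 1 := by
    nlinarith [mul_le_mul_of_nonneg_right hLLmax (by positivity : 0 ≤ η * n)]
  have hPL' : ∀ x, 2 * μ * (F x - F xstar) ≤ ‖gradient F x‖ ^ 2 := fun x => by
    have := hPL x
    rw [one_div_mul_eq_div, le_div_iff₀ (by positivity)] at this
    linarith
  have hepoch := igIter_epoch_le hn hdiff hF hsmooth hsmooth_i hmin hPL' hWGC hη0 hLη hsmall hαη
  -- for constant `F` the claim is trivial; otherwise PL and `L`-smoothness force `μ ≤ L`,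
  -- which makes the contraction factor `1 - n μ η / 2` nonnegative
  by_cases hconst : ∀ x, F x = F xstar
  · simp only [hconst, sub_self, mul_zero, zero_add]
    positivity
  obtain ⟨z, hz⟩ := not_forall.1 hconst
  have hFdiff : Differentiable ℝ F := hF ▸ (Differentiable.fun_sum fun i _ => hdiff i).const_mul _
  have hμL : μ ≤ L :=
    pl_const_le_of_lipschitz_gradient hFdiff hL hsmooth hmin hPL' ((hmin z).lt_of_ne' hz)
  have hrate := le_pow_mul_add_div_of_le_mul_add
    (a := fun t => F ((fun y => igIter (fun i => gradient (f i)) η y n)^[t] x0) - F xstar)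
    (q := 1 - n * μ * η / 2) (N := Lmax ^ 2 * n ^ 3 * η ^ 3 * σ ^ 2)
    (by nlinarith) (by linarith [show 0 < n * μ * η by positivity]) (by positivity)
    (fun t => by simpa only [Function.iterate_succ_apply'] using hepoch _) T
  refine hrate.trans_eq ?_
  rw [Function.iterate_zero_apply]
  congr 1
  field_simp
  ring

/-- Incremental gradient method for `μ`-PL objectives under the relaxed weak
growth condition: deterministic linear convergence to a noise-dominated
neighbourhood, where `igIter … n` applied `T` times is the iterate at the end
of epoch `T`. -/
theorem ig_pl_relaxed_wgc_rate
    (d n : ℕ) (hn : 0 < n)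
    (f : Fin n → EuclideanSpace ℝ (Fin d) → ℝ)
    (hdiff : ∀ i, Differentiable ℝ (f i))
    (F : EuclideanSpace ℝ (Fin d) → ℝ)
    (hF : F = fun x => (n : ℝ)⁻¹ * ∑ i, f i x)
    (L Lmax μ : ℝ) (hL : 0 < L) (hμ : 0 < μ) (hLLmax : L ≤ Lmax)
    (hsmooth : ∀ x y : EuclideanSpace ℝ (Fin d),
      ‖gradient F x - gradient F y‖ ≤ L * ‖x - y‖)
    (hsmooth_i : ∀ i, ∀ x y : EuclideanSpace ℝ (Fin d),
      ‖gradient (f i) x - gradient (f i) y‖ ≤ Lmax * ‖x - y‖)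
    (xstar : EuclideanSpace ℝ (Fin d))
    (hmin : ∀ x, F xstar ≤ F x)
    (hPL : ∀ x, F x - F xstar ≤ 1 / (2 * μ) * ‖gradient F x‖ ^ 2)
    (α σ : ℝ) (hα : 0 < α) (hσ : 0 ≤ σ)
    (hWGC : ∀ x, (n : ℝ)⁻¹ * ∑ i, ‖gradient (f i) x‖ ^ 2
      ≤ 2 * α * L * (F x - F xstar) + σ ^ 2)
    (η : ℝ) (hη0 : 0 < η)
    (hη : η ≤ min (1 / (Real.sqrt 2 * n * Lmax)) (Real.sqrt μ / (2 * Lmax * n * Real.sqrt (α * L))))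
    (x0 : EuclideanSpace ℝ (Fin d)) (T : ℕ) :
    F ((fun y => igIter (fun i => gradient (f i)) η y n)^[T] x0) - F xstar
      ≤ (1 - n * μ * η / 2) ^ T * (F x0 - F xstar)
        + 2 * Lmax ^ 2 * η ^ 2 * n ^ 2 * σ ^ 2 / μ :=
  ig_pl_relaxed_wgc_rate_general d n hn f hdiff F hF L Lmax μ hL hμ hLLmax hsmooth hsmooth_i xstar
    hmin hPL α σ hα hWGC η hη0 hη x0 T
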